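/- arXiv:1901.02756 — 2 statements merged into one kernel-verified Lean document; each statement's English description precedes it below -/
import Mathlib

section
/- Let θ̂ : ℝ → ℝ be a continuously differentiable function satisfying θ̂'(t) = -dz(θ̂(t)) + u(t) where |u(t)| ≤ K for all t ≥ 0, and suppose c > 2K/ε₀. Then θ̂ is bounded: for all t ≥ 0, |θ̂(t)| ≤ max(|θ̂(0)|, a₀ + ε₀). -/
/-! The dead zone is odd and, beyond `a + ε`, affine with slope `c`. Hence once `θ̂ ≥ a + ε`
the drift `-dz θ̂ + u` is at most `-c ε / 2 + K < 0`, so the level `M = max |θ̂ 0| (a + ε)` can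
never be crossed upwards; by oddness the same holds for `-θ̂`. -/

noncomputable def dz (c a ε : ℝ) (s : ℝ) : ℝ :=
  if |s| ≤ a then 0
  else if |s| < a + ε then c * ((|s| - a)^2 / (2 * ε)) * Real.sign s
  else c * s - c * (a + ε / 2) * Real.sign s

theorem le_of_hasDerivAt_of_deriv_neg_of_eq {f f' : ℝ → ℝ} {t₀ M : ℝ}
    (hf : ∀ t ≥ t₀, HasDerivAt f (f' t) t) (h₀ : f t₀ ≤ M)
    (hM : ∀ t ≥ t₀, f t = M → f' t < 0) : ∀ t ≥ t₀, f t ≤ M := fun _ ht =>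
  image_le_of_deriv_right_lt_deriv_boundary (B := fun _ => M) (B' := 0)
    (fun x hx => (hf x hx.1).continuousAt.continuousWithinAt)
    (fun x hx => (hf x hx.1).hasDerivWithinAt) h₀ (fun _ => hasDerivAt_const _ _)
    (fun x hx => hM x hx.1) ⟨ht, le_rfl⟩

theorem dz_neg (c a ε s : ℝ) : dz c a ε (-s) = -dz c a ε s := by
  unfold dz
  rw [abs_neg, Real.sign_neg]
  split_ifs <;> ring

theorem dz_of_add_le {c a ε s : ℝ} (hε : 0 < ε) (hs₀ : 0 < s) (hs : a + ε ≤ s) :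
    dz c a ε s = c * s - c * (a + ε / 2) := by
  rw [dz, abs_of_pos hs₀, Real.sign_of_pos hs₀, if_neg (by linarith), if_neg (by linarith),
    mul_one]

theorem neg_dz_add_neg {c a ε K s v : ℝ} (hε : 0 < ε) (hcK : 2 * K / ε < c)
    (hs₀ : 0 < s) (hs : a + ε ≤ s) (hv : |v| ≤ K) : -dz c a ε s + v < 0 := by
  have hKc : 2 * K < c * ε := (div_lt_iff₀ hε).mp hcK
  have hc : 0 < c := by nlinarith [abs_nonneg v]
  rw [dz_of_add_le hε hs₀ hs]
  nlinarith [le_abs_self v]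

theorem le_of_hasDerivAt_neg_dz_add {c a ε K M : ℝ} (ha : 0 ≤ a) (hε : 0 < ε)
    (hcK : 2 * K / ε < c) {f u : ℝ → ℝ} (huK : ∀ t ≥ (0:ℝ), |u t| ≤ K)
    (hode : ∀ t ≥ (0:ℝ), HasDerivAt f (-dz c a ε (f t) + u t) t)
    (hM : a + ε ≤ M) (h₀ : f 0 ≤ M) : ∀ t ≥ (0:ℝ), f t ≤ M :=
  le_of_hasDerivAt_of_deriv_neg_of_eq hode h₀ fun t ht hft =>
    neg_dz_add_neg hε hcK (by linarith) (hft ▸ hM) (huK t ht)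

theorem stmt_7_general (c a ε K : ℝ) (ha : 0 ≤ a) (hε : 0 < ε)
    (hcK : 2 * K / ε < c)
    (θhat u : ℝ → ℝ) (huK : ∀ t ≥ (0:ℝ), |u t| ≤ K)
    (hode : ∀ t ≥ (0:ℝ), HasDerivAt θhat (-(dz c a ε (θhat t)) + u t) t) :
    ∀ t ≥ (0:ℝ), |θhat t| ≤ max (|θhat 0|) (a + ε) := by
  have hM : a + ε ≤ max |θhat 0| (a + ε) := le_max_right _ _
  have hθ₀ : |θhat 0| ≤ max |θhat 0| (a + ε) := le_max_left _ _
  have hode_neg : ∀ t ≥ (0:ℝ),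
      HasDerivAt (fun x => -θhat x) (-dz c a ε (-θhat t) + -u t) t := fun t ht => by
    rw [dz_neg, ← neg_add]
    exact (hode t ht).neg
  intro t ht
  rw [abs_le, neg_le]
  exact ⟨le_of_hasDerivAt_neg_dz_add ha hε hcK (fun s hs => by simpa using huK s hs) hode_neg hM
      ((neg_le_abs _).trans hθ₀) t ht,
    le_of_hasDerivAt_neg_dz_add ha hε hcK huK hode hM ((le_abs_self _).trans hθ₀) t ht⟩

theorem stmt_7 (c a ε K : ℝ) (hc : 0 < c) (ha : 0 ≤ a) (hε : 0 < ε)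
    (hK : 0 ≤ K) (hcK : 2 * K / ε < c)
    (θhat u : ℝ → ℝ) (hu : Continuous u) (huK : ∀ t ≥ (0:ℝ), |u t| ≤ K)
    (hode : ∀ t ≥ (0:ℝ), HasDerivAt θhat (-(dz c a ε (θhat t)) + u t) t) :
    ∀ t ≥ (0:ℝ), |θhat t| ≤ max (|θhat 0|) (a + ε) :=
  stmt_7_general c a ε K ha hε hcK θhat u huK hode
end

section
/- Suppose x : [0,∞) → ℝⁿ solves x' = f(x) with f locally Lipschitz, the forward orbit is bounded, and V : ℝⁿ → ℝ is C¹ with ∇V(x)·f(x) ≤ 0 everywhere. Then the ω-limit set of x is nonempty, compact, invariant, and contained in the set {x : ∇V(x)·f(x) = 0}. -/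
/-!
Along the trajectory, `V ∘ x` is nonincreasing and bounded below on the compact ball containing
the orbit, so it converges. The ω-limit set is the set of cluster points of `x` at `+∞`, hence
closed, and nonempty and compact because the orbit lies in a compact set. Invariance is continuous
dependence on initial data: if `x (u k) → y`, Grönwall's inequality gives `x (u k + t) → φ t`.
Finally `⟪∇V, f⟫` vanishes on the ω-limit set because `V ∘ x` converges while `x` has bounded speed.
-/

open RealInnerProductSpace

open Set Filter Topology Metric

section ClusterPoints

variable {ι X : Type*} [TopologicalSpace X]

theorem exists_seq_tendsto_iff_mapClusterPt [FirstCountableTopology X] {l : Filter ι}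
    [l.IsCountablyGenerated] {x : ι → X} {y : X} :
    (∃ u : ℕ → ι, Tendsto u atTop l ∧ Tendsto (x ∘ u) atTop (𝓝 y)) ↔ MapClusterPt y l x := by
  refine ⟨fun ⟨u, hu, hxu⟩ => hxu.mapClusterPt.of_comp hu, fun hy => ?_⟩
  obtain ⟨u, hxu, hu⟩ := hy.exists_seq_tendsto
  exact ⟨u, hu, hxu⟩

theorem isCompact_setOf_mapClusterPt [T2Space X] {l : Filter ι} {x : ι → X} {K : Set X}
    (hK : IsCompact K) (hxK : ∀ᶠ i in l, x i ∈ K) : IsCompact {y | MapClusterPt y l x} :=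
  hK.of_isClosed_subset isClosed_setOfPred_clusterPt
    fun _ hy => hK.isClosed.mem_of_mapClusterPt hy hxK

theorem nonempty_setOf_mapClusterPt {l : Filter ι} [l.NeBot] {x : ι → X} {K : Set X}
    (hK : IsCompact K) (hxK : ∀ᶠ i in l, x i ∈ K) : {y | MapClusterPt y l x}.Nonempty :=
  let ⟨y, _, hy⟩ := hK.exists_mapClusterPt_of_frequently hxK.frequently
  ⟨y, hy⟩

end ClusterPoints

theorem AntitoneOn.exists_tendsto_atTop {α β : Type*} [LinearOrder α]
    [ConditionallyCompleteLinearOrder β] [TopologicalSpace β] [OrderTopology β]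
    {f : α → β} {a : α} (hf : AntitoneOn f (Ici a)) (hbdd : BddBelow (f '' Ici a)) :
    ∃ c, Tendsto f atTop (𝓝 c) := by
  have hanti : Antitone fun t => f (max a t) := fun s t hst =>
    hf (le_max_left a s) (le_max_left a t) (max_le_max le_rfl hst)
  have hbdd' : BddBelow (range fun t => f (max a t)) :=
    hbdd.mono (range_subset_iff.2 fun t => mem_image_of_mem f (le_max_left a t))
  refine ⟨_, (tendsto_atTop_ciInf hanti hbdd').congr' ?_⟩
  filter_upwards [eventually_ge_atTop a] with t ht
  rw [max_eq_right ht]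

section Trajectories

variable {E : Type*} [NormedAddCommGroup E] [NormedSpace ℝ E]

theorem dist_le_of_trajectories_ODE_Icc {f : E → E} {s : Set E} {K : NNReal}
    (hf : LipschitzOnWith K f s) {F G : ℝ → E} {T : ℝ} (hT : 0 ≤ T)
    (hF : ∀ t ∈ Icc 0 T, HasDerivAt F (f (F t)) t) (hFs : ∀ t ∈ Icc 0 T, F t ∈ s)
    (hG : ∀ t ∈ Icc 0 T, HasDerivAt G (f (G t)) t) (hGs : ∀ t ∈ Icc 0 T, G t ∈ s) :
    dist (F T) (G T) ≤ dist (F 0) (G 0) * Real.exp (K * T) := by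
  simpa using dist_le_of_trajectories_ODE_of_mem (v := fun _ => f) (s := fun _ => s)
    (fun _ _ => hf) (fun t ht => (hF t ht).continuousAt.continuousWithinAt)
    (fun t ht => (hF t (Ico_subset_Icc_self ht)).hasDerivWithinAt)
    (fun t ht => hFs t (Ico_subset_Icc_self ht))
    (fun t ht => (hG t ht).continuousAt.continuousWithinAt)
    (fun t ht => (hG t (Ico_subset_Icc_self ht)).hasDerivWithinAt)
    (fun t ht => hGs t (Ico_subset_Icc_self ht)) le_rfl T ⟨hT, le_rfl⟩

theorem dist_le_of_trajectories_ODE_uIcc {f : E → E} {s : Set E} {K : NNReal}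
    (hf : LipschitzOnWith K f s) {F G : ℝ → E} {T : ℝ}
    (hF : ∀ t ∈ uIcc 0 T, HasDerivAt F (f (F t)) t) (hFs : ∀ t ∈ uIcc 0 T, F t ∈ s)
    (hG : ∀ t ∈ uIcc 0 T, HasDerivAt G (f (G t)) t) (hGs : ∀ t ∈ uIcc 0 T, G t ∈ s) :
    dist (F T) (G T) ≤ dist (F 0) (G 0) * Real.exp (K * |T|) := by
  rcases le_total 0 T with hT | hT
  · rw [uIcc_of_le hT] at hF hFs hG hGs
    rw [abs_of_nonneg hT]
    exact dist_le_of_trajectories_ODE_Icc hf hT hF hFs hG hGs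
  · rw [uIcc_of_ge hT] at hF hFs hG hGs
    have hneg : ∀ t ∈ Icc 0 (-T), -t ∈ Icc T 0 := fun t ht => ⟨by linarith [ht.2], by linarith [ht.1]⟩
    have hrev : ∀ H : ℝ → E, (∀ t ∈ Icc T 0, HasDerivAt H (f (H t)) t) →
        ∀ t ∈ Icc 0 (-T), HasDerivAt (fun r => H (-r)) ((-f) (H (-t))) t := fun H hH t ht => by
      simpa [Function.comp_def] using (hH (-t) (hneg t ht)).scomp t (hasDerivAt_neg t)
    have := dist_le_of_trajectories_ODE_Icc (f := -f) (by simpa using hf.neg) (neg_nonneg.2 hT)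
      (hrev F hF) (fun t ht => hFs _ (hneg t ht)) (hrev G hG) (fun t ht => hGs _ (hneg t ht))
    simpa [abs_of_nonpos hT] using this

/-- By Grönwall, `x (s + t)` stays within `dist (x s) (φ 0) * exp (L * |t|)` of `φ t`, where `L` is a
Lipschitz constant of `f` on a compact set containing both trajectories over the relevant times. -/
theorem mapClusterPt_atTop_of_solution {f : E → E} (hf : LocallyLipschitz f)
    {x φ : ℝ → E} {K : Set E} (hK : IsCompact K) (hxK : ∀ t ≥ 0, x t ∈ K)
    (hx : ∀ t ≥ 0, HasDerivAt x (f (x t)) t) (hφ : ∀ t, HasDerivAt φ (f (φ t)) t)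
    (hφ0 : MapClusterPt (φ 0) atTop x) (t : ℝ) : MapClusterPt (φ t) atTop x := by
  have hφc : Continuous φ := continuous_iff_continuousAt.2 fun s => (hφ s).continuousAt
  obtain ⟨L, hL⟩ := hf.locallyLipschitzOn.exists_lipschitzOnWith_of_compact
    (hK.union (isCompact_uIcc.image hφc))
  have hshift : ∀ s ≥ max 0 (-t), dist (x (s + t)) (φ t) ≤ dist (x s) (φ 0) * Real.exp (L * |t|) := by
    intro s hs
    have hpos : ∀ r ∈ uIcc 0 t, 0 ≤ s + r := fun r hr => by
      rcases min_le_iff.1 hr.1 with h | h <;> linarith [le_max_left 0 (-t), le_max_right 0 (-t)]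
    simpa using dist_le_of_trajectories_ODE_uIcc hL (F := fun r => x (s + r))
      (fun r hr => (hx _ (hpos r hr)).comp_const_add s r) (fun r hr => Or.inl (hxK _ (hpos r hr)))
      (fun r _ => hφ r) (fun r hr => Or.inr (mem_image_of_mem φ hr))
  obtain ⟨u, hxu, hu⟩ := hφ0.exists_seq_tendsto
  have hut : Tendsto (fun k => u k + t) atTop atTop := tendsto_atTop_add_const_right _ t hu
  refine Tendsto.mapClusterPt (x := φ t) ?_ |>.of_comp hut
  rw [tendsto_iff_dist_tendsto_zero]
  refine squeeze_zero' (Eventually.of_forall fun _ => dist_nonneg)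
    ((hu.eventually_ge_atTop (max 0 (-t))).mono fun k hk => hshift (u k) hk) ?_
  simpa using ((tendsto_iff_dist_tendsto_zero.1 hxu).mul_const (Real.exp (L * |t|)))

end Trajectories

theorem image_sub_le_mul_sub_of_hasDerivAt_le {W W' : ℝ → ℝ} {a b C : ℝ} (hab : a ≤ b)
    (hW : ∀ s ∈ Icc a b, HasDerivAt W (W' s) s) (hW' : ∀ s ∈ Ioo a b, W' s ≤ C) :
    W b - W a ≤ C * (b - a) := by
  refine (convex_Icc a b).image_sub_le_mul_sub_of_deriv_le
    (fun s hs => (hW s hs).continuousAt.continuousWithinAt)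
    (fun s hs => (hW s (interior_subset hs)).differentiableAt.differentiableWithinAt)
    (fun s hs => ?_) a (left_mem_Icc.2 hab) b (right_mem_Icc.2 hab) hab
  rw [interior_Icc] at hs
  rw [(hW s (Ioo_subset_Icc_self hs)).deriv]
  exact hW' s hs

section Lyapunov

variable {E : Type*} [NormedAddCommGroup E] [NormedSpace ℝ E]

/-- If `W' = g ∘ x` along a trajectory of bounded speed and `W` converges, then `g ≥ 0` at every
ω-limit point `y`: were `g y < 0`, each of the infinitely many late visits of `x` near `y` would
keep `x` near `y` for a fixed time `τ`, lowering `W` by a fixed amount. -/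
theorem nonneg_of_mapClusterPt_of_tendsto {x x' : ℝ → E} {W : ℝ → ℝ} {g : E → ℝ} {M c : ℝ}
    {y : E} (hx : ∀ t ≥ 0, HasDerivAt x (x' t) t) (hx' : ∀ t ≥ 0, ‖x' t‖ ≤ M)
    (hW : ∀ t ≥ 0, HasDerivAt W (g (x t)) t) (hWc : Tendsto W atTop (𝓝 c))
    (hg : ContinuousAt g y) (hy : MapClusterPt y atTop x) : 0 ≤ g y := by
  by_contra! hneg
  obtain ⟨δ, hδ, hgδ⟩ : ∃ δ > 0, ∀ z, dist z y < δ → g z < g y / 2 :=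
    Metric.eventually_nhds_iff.1 (hg.eventually (eventually_lt_nhds (by linarith)))
  have hM : 0 ≤ M := (norm_nonneg _).trans (hx' 0 le_rfl)
  set τ := δ / (2 * (M + 1)) with hτ_def
  have hτ : 0 < τ := by positivity
  have hMτ : M * τ < δ / 2 := by
    rw [hτ_def, mul_div_assoc', div_lt_div_iff₀ (by positivity) two_pos]
    nlinarith
  have hdrop : ∀ t ≥ 0, dist (x t) y < δ / 2 → W (t + τ) - W t ≤ g y / 2 * τ := by
    intro t ht hxt
    have hIcc : ∀ s ∈ Icc t (t + τ), 0 ≤ s := fun s hs => ht.trans hs.1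
    have hnear : ∀ s ∈ Icc t (t + τ), dist (x s) y < δ := by
      intro s hs
      have hmove := norm_image_sub_le_of_norm_deriv_le_segment'
        (fun r hr => (hx r (hIcc r hr)).hasDerivWithinAt)
        (fun r hr => hx' r (hIcc r (Ico_subset_Icc_self hr))) s hs
      calc dist (x s) y ≤ dist (x s) (x t) + dist (x t) y := dist_triangle _ _ _
        _ < δ := by
          rw [dist_eq_norm]
          nlinarith [hs.1, hs.2]
    simpa using image_sub_le_mul_sub_of_hasDerivAt_le (by linarith) (fun s hs => hW s (hIcc s hs))
      fun s hs => (hgδ _ (hnear s (Ioo_subset_Icc_self hs))).le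
  have hincr : Tendsto (fun t => W (t + τ) - W t) atTop (𝓝 0) := by
    simpa using (hWc.comp (tendsto_atTop_add_const_right _ τ tendsto_id)).sub hWc
  obtain ⟨t, hxt, ht, hWt⟩ := ((hy.frequently (ball_mem_nhds y (half_pos hδ))).and_eventually
    ((eventually_ge_atTop 0).and (hincr.eventually (eventually_gt_nhds
      (by nlinarith : g y / 2 * τ < 0))))).exists
  linarith [hdrop t ht hxt]

theorem eq_zero_of_mapClusterPt_of_tendsto {x x' : ℝ → E} {W : ℝ → ℝ} {g : E → ℝ} {M c : ℝ}
    {y : E} (hx : ∀ t ≥ 0, HasDerivAt x (x' t) t) (hx' : ∀ t ≥ 0, ‖x' t‖ ≤ M)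
    (hW : ∀ t ≥ 0, HasDerivAt W (g (x t)) t) (hWc : Tendsto W atTop (𝓝 c))
    (hg : ContinuousAt g y) (hy : MapClusterPt y atTop x) : g y = 0 := by
  refine le_antisymm ?_ (nonneg_of_mapClusterPt_of_tendsto hx hx' hW hWc hg hy)
  simpa using nonneg_of_mapClusterPt_of_tendsto (W := -W) (g := -g) hx hx'
    (fun t ht => (hW t ht).neg) hWc.neg hg.neg hy

end Lyapunov

section Gradient

variable {F : Type*} [NormedAddCommGroup F] [InnerProductSpace ℝ F] [CompleteSpace F]

theorem HasGradientAt.comp_hasDerivAt {V : F → ℝ} {v : F} {γ : ℝ → F} {γ' : F} {t : ℝ}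
    (hV : HasGradientAt V v (γ t)) (hγ : HasDerivAt γ γ' t) : HasDerivAt (V ∘ γ) ⟪v, γ'⟫ t := by
  simpa using hV.hasFDerivAt.comp_hasDerivAt t hγ

theorem ContDiff.continuous_gradient {V : F → ℝ} (hV : ContDiff ℝ 1 V) : Continuous (gradient V) :=
  (InnerProductSpace.toDual ℝ F).symm.continuous.comp (hV.continuous_fderiv one_ne_zero)

end Gradient

/-- LaSalle's invariance principle: for `x' = f(x)` with locally Lipschitz `f`,
bounded forward orbit, and a `C¹` function `V` with `⟪∇V, f⟫ ≤ 0`, the ω-limit set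
of the trajectory is nonempty, compact, invariant, and contained in
`{y | ⟪∇V(y), f(y)⟫ = 0}`. -/
theorem stmt_18 (n : ℕ) (f : EuclideanSpace ℝ (Fin n) → EuclideanSpace ℝ (Fin n))
    (hf : LocallyLipschitz f)
    (x : ℝ → EuclideanSpace ℝ (Fin n))
    (hx : ∀ t ≥ (0:ℝ), HasDerivAt x (f (x t)) t)
    (hbdd : ∃ C : ℝ, ∀ t ≥ (0:ℝ), ‖x t‖ ≤ C)
    (V : EuclideanSpace ℝ (Fin n) → ℝ) (hV : ContDiff ℝ 1 V)
    (hVdec : ∀ y, ⟪gradient V y, f y⟫ ≤ 0) :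
    let Ω : Set (EuclideanSpace ℝ (Fin n)) :=
      {y | ∃ u : ℕ → ℝ, Filter.Tendsto u Filter.atTop Filter.atTop ∧
        Filter.Tendsto (fun k => x (u k)) Filter.atTop (nhds y)}
    Ω.Nonempty ∧ IsCompact Ω ∧
      (∀ y ∈ Ω, ∀ φ : ℝ → EuclideanSpace ℝ (Fin n), φ 0 = y →
        (∀ t : ℝ, HasDerivAt φ (f (φ t)) t) → ∀ t : ℝ, φ t ∈ Ω) ∧
      Ω ⊆ {y | ⟪gradient V y, f y⟫ = 0} := by
  intro Ω
  have hΩ : Ω = {y | MapClusterPt y atTop x} := Set.ext fun _ => exists_seq_tendsto_iff_mapClusterPt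
  rw [hΩ]
  obtain ⟨C, hC⟩ := hbdd
  have hK := isCompact_closedBall (0 : EuclideanSpace ℝ (Fin n)) C
  have hxK : ∀ t ≥ 0, x t ∈ closedBall 0 C := fun t ht => mem_closedBall_zero_iff.2 (hC t ht)
  have hxK' : ∀ᶠ t in atTop, x t ∈ closedBall 0 C := (eventually_ge_atTop 0).mono hxK
  have hVx : ∀ t ≥ 0, HasDerivAt (V ∘ x) ⟪gradient V (x t), f (x t)⟫ t := fun t ht =>
    ((hV.differentiable one_ne_zero) (x t)).hasGradientAt.comp_hasDerivAt (hx t ht)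
  obtain ⟨c, hc⟩ : ∃ c, Tendsto (V ∘ x) atTop (𝓝 c) := by
    refine AntitoneOn.exists_tendsto_atTop ?_ ?_ (a := 0)
    · exact antitoneOn_of_hasDerivWithinAt_nonpos (convex_Ici 0)
        (fun t ht => (hVx t ht).continuousAt.continuousWithinAt)
        (fun t ht => (hVx t (interior_subset ht)).hasDerivWithinAt) (fun _ _ => hVdec _)
    · refine (hK.bddBelow_image hV.continuous.continuousOn).mono ?_
      rw [image_comp]
      exact image_mono (image_subset_iff.2 hxK)
  obtain ⟨M, hM⟩ := hK.exists_bound_of_continuousOn hf.continuous.continuousOn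
  refine ⟨nonempty_setOf_mapClusterPt hK hxK', isCompact_setOf_mapClusterPt hK hxK', ?_, ?_⟩
  · rintro _ hy φ rfl hφ t
    exact mapClusterPt_atTop_of_solution hf hK hxK hx hφ hy t
  · intro y hy
    exact eq_zero_of_mapClusterPt_of_tendsto (g := fun z => ⟪gradient V z, f z⟫) hx (fun t ht => hM _ (hxK t ht)) hVx hc
      ((hV.continuous_gradient.inner hf.continuous).continuousAt) hy
end
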